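/- arXiv:math/0508290 — 4 statements merged into one kernel-verified Lean document; each statement's English description precedes it below -/
import Mathlib

section
/- Conversely, if a smooth family t ↦ A_t with A_t = A_{e^{2tf}g} satisfies the ODE Ȧ_t = (a-b) f A_t − a [f, A_t] for every smooth real function f and every metric g, with A_0 = A_g, then A_{e^{2f}g} = e^{-bf} A_g e^{af}, i.e. A is conformally covariant of bidegree (a,b). -/
open scoped Topology

/-- Conversely, if for every metric `g` and smooth real function `f` the smooth
family `A_t := A_{e^{2tf} g}` satisfies the ODE `Ȧ_t = (a-b) f A_t − a [f, A_t]` (with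
`A_0 = A_g`, which holds since `e^{0·f} g = g`), then `A_{e^{2f}g} = e^{-bf} A_g e^{af}`,
i.e. `A` is conformally covariant of bidegree `(a,b)`.  Operators are modeled as elements of
a Banach algebra `𝒜`; `mult φ` is multiplication by `φ` and `e^{cφ} = exp (c • mult φ)`. -/
theorem stmt2
    {M : Type*} {𝒜 : Type*} [NormedRing 𝒜] [NormedAlgebra ℝ 𝒜] [CompleteSpace 𝒜]
    (Met : Type*)
    (conf : Met → (M → ℝ) → Met)
    (hconf_zero : ∀ g, conf g (0 : M → ℝ) = g)
    (mult : (M → ℝ) → 𝒜)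
    (hmult_smul : ∀ (c : ℝ) (φ : M → ℝ), mult (c • φ) = c • mult φ)
    (A : Met → 𝒜) (a b : ℝ)
    -- the ODE `Ȧ_t = (a-b) f A_t − a [f, A_t]` for every metric `g` and every function `f`:
    (hODE : ∀ (g : Met) (f : M → ℝ) (t : ℝ),
      HasDerivAt (fun s : ℝ => A (conf g (s • f)))
        ((a - b) • (mult f * A (conf g (t • f)))
          - a • (mult f * A (conf g (t • f)) - A (conf g (t • f)) * mult f)) t) :
    ∀ (g : Met) (f : M → ℝ),
      A (conf g f) = NormedSpace.exp (-(b • mult f)) * A g * NormedSpace.exp (a • mult f) := by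
  intro g f
  set m := mult f with hm
  set x : 𝒜 := b • m with hx
  set y : 𝒜 := -(a • m) with hy
  set B : ℝ → 𝒜 := fun t => A (conf g (t • f)) with hB
  have hB' : ∀ t : ℝ, HasDerivAt B (-(x * B t) - B t * y) t := by
    intro t
    have h := hODE g f t
    convert h using 1
    simp only [hx, hy, sub_smul, smul_sub, smul_mul_assoc, mul_smul_comm, mul_neg, neg_neg,
      ← hm]
    module
  set C : ℝ → 𝒜 := fun t => NormedSpace.exp (t • x) * B t * NormedSpace.exp (t • y)
    with hC
  have hC' : ∀ t : ℝ, HasDerivAt C 0 t := by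
    intro t
    have h1 := hasDerivAt_exp_smul_const (𝕂 := ℝ) x t
    have h2 := hasDerivAt_exp_smul_const (𝕂 := ℝ) y t
    have h3 := ((h1.mul (hB' t)).mul h2)
    have hcx : NormedSpace.exp (t • x) * x = x * NormedSpace.exp (t • x) :=
      (((Commute.refl x).smul_left t).exp_left).eq
    have hcy : y * NormedSpace.exp (t • y) = NormedSpace.exp (t • y) * y :=
      (((Commute.refl y).smul_right t).exp_right).eq
    have key : ∀ E F Bt : 𝒜, E * x = x * E → y * F = F * y →
        (E * x * Bt + E * (-(x * Bt) - Bt * y)) * F + E * Bt * (F * y) = 0 := by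
      intro E F Bt hE hF
      rw [mul_sub, mul_neg, ← mul_assoc E x Bt, hE, ← hF]
      noncomm_ring
    convert h3 using 1
    · rfl
    exact (key _ _ _ hcx hcy).symm
  have hconst : ∀ t : ℝ, C t = C 0 := by
    intro t
    have hdiff : Differentiable ℝ C := fun t => (hC' t).differentiableAt
    exact is_const_of_deriv_eq_zero hdiff (fun t => (hC' t).deriv) t 0
  have h1 := hconst 1
  have hC0 : C 0 = A g := by
    simp [hC, hB, hconf_zero]
  have hC1 : C 1 = NormedSpace.exp x * A (conf g f) * NormedSpace.exp y := by
    simp [hC, hB]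
  rw [hC0, hC1] at h1
  have hinv1 : NormedSpace.exp (-x) * NormedSpace.exp x = 1 := by
    rw [← NormedSpace.exp_add_of_commute_of_mem_ball (𝕂 := ℝ) (Commute.neg_left (Commute.refl x))
      ((NormedSpace.expSeries_radius_eq_top ℝ 𝒜).symm ▸ edist_lt_top _ _) ((NormedSpace.expSeries_radius_eq_top ℝ 𝒜).symm ▸ edist_lt_top _ _)]
    simp
  have hinv2 : NormedSpace.exp y * NormedSpace.exp (-y) = 1 := by
    rw [← NormedSpace.exp_add_of_commute_of_mem_ball (𝕂 := ℝ) (Commute.neg_right (Commute.refl y))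
      ((NormedSpace.expSeries_radius_eq_top ℝ 𝒜).symm ▸ edist_lt_top _ _) ((NormedSpace.expSeries_radius_eq_top ℝ 𝒜).symm ▸ edist_lt_top _ _)]
    simp
  have : A (conf g f) = NormedSpace.exp (-x) * A g * NormedSpace.exp (-y) := by
    rw [← h1]
    symm
    calc NormedSpace.exp (-x) * (NormedSpace.exp x * A (conf g f) * NormedSpace.exp y)
          * NormedSpace.exp (-y)
        = (NormedSpace.exp (-x) * NormedSpace.exp x) * A (conf g f)
          * (NormedSpace.exp y * NormedSpace.exp (-y)) := by noncomm_ring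
      _ = A (conf g f) := by rw [hinv1, hinv2]; simp
  rw [this]
  simp only [hx, hy, neg_neg]
end

section
/- Let σ : ℝⁿ → ℂ be of the form σ(ξ) = τ(ξ) + Σ_{j=0}^N ψ(ξ) σ_{α-j}(ξ), where τ ∈ L¹(ℝⁿ), each σ_{α-j} is continuous on ℝⁿ∖{0} and positively homogeneous of degree α−j with α−j+n ≠ 0 for all j, and ψ is a smooth cutoff vanishing near 0 and equal to 1 outside a ball. Then as R → ∞, ∫_{|ξ|≤R} σ(ξ) dξ = Σ_{j : α-j+n>0} c_j R^{α-j+n} + C + o(1), where c_j = (∫_{S^{n-1}} σ_{α-j}(ω) dω)/(α−j+n) and the finite part C (the cut-off integral) equals ∫_{ℝⁿ} τ + Σ_j [∫_{|ξ|≤1} ψ σ_{α-j} dξ − (∫_{S^{n-1}} σ_{α-j} dω)/(α−j+n)]. -/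
open MeasureTheory Filter Set
open scoped Topology Classical

/-- Asymptotics of integrals of classical symbols over balls, and the cut-off
(finite part) integral.  Here `σ = τ + Σ_{j≤N} ψ σ_{α-j}` with `τ ∈ L¹(ℝⁿ)`, `σ_{α-j}`
continuous away from `0` and positively homogeneous of degree `α-j`, `α-j+n ≠ 0`, and `ψ` a
smooth cutoff.  The sphere integrals `∫_{S^{n-1}} σ_{α-j} dω = S_j` are encoded through the
polar-coordinate identity `∫_{1≤|ξ|≤R} σ_{α-j} dξ = S_j (R^{α-j+n} − 1)/(α-j+n)`.  Then
`∫_{|ξ|≤R} σ dξ − Σ_{j : α-j+n>0} (S_j/(α-j+n)) R^{α-j+n}` converges as `R → ∞` to the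
finite part `C = ∫ τ + Σ_j [∫_{|ξ|≤1} ψ σ_{α-j} − S_j/(α-j+n)]`. -/
theorem stmt7 (n : ℕ) (hn : 0 < n) (N : ℕ) (α : ℝ)
    (σ τ : EuclideanSpace ℝ (Fin n) → ℂ)
    (σh : ℕ → EuclideanSpace ℝ (Fin n) → ℂ)
    (S : ℕ → ℂ)
    (ψ : EuclideanSpace ℝ (Fin n) → ℝ)
    (hψsmooth : ContDiff ℝ (⊤ : ℕ∞) ψ)
    (hψrange : ∀ ξ, ψ ξ ∈ Set.Icc (0 : ℝ) 1)
    (hψ0 : ∃ r₀ > (0 : ℝ), ∀ ξ, ‖ξ‖ ≤ r₀ → ψ ξ = 0)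
    (hψ1 : ∀ ξ, 1 ≤ ‖ξ‖ → ψ ξ = 1)
    (hτ : Integrable τ)
    (hσ : ∀ ξ, σ ξ = τ ξ + ∑ j ∈ Finset.range (N + 1), (ψ ξ : ℂ) * σh j ξ)
    (hcont : ∀ j ≤ N, ContinuousOn (σh j) {ξ | ξ ≠ 0})
    (hhom : ∀ j ≤ N, ∀ t : ℝ, 0 < t → ∀ ξ, ξ ≠ 0 →
      σh j (t • ξ) = ((t ^ (α - j) : ℝ) : ℂ) * σh j ξ)
    (hne : ∀ j ≤ N, α - j + n ≠ 0)
    -- polar-coordinate formula encoding the sphere integrals S j: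
    (hS : ∀ j ≤ N, ∀ R : ℝ, 1 ≤ R →
      ∫ ξ in {ξ : EuclideanSpace ℝ (Fin n) | 1 ≤ ‖ξ‖ ∧ ‖ξ‖ ≤ R}, σh j ξ
        = S j * (((R ^ (α - j + n) : ℝ) : ℂ) - 1) / ((α - j + n : ℝ) : ℂ)) :
    Tendsto (fun R : ℝ =>
        (∫ ξ in Metric.closedBall (0 : EuclideanSpace ℝ (Fin n)) R, σ ξ)
          - ∑ j ∈ (Finset.range (N + 1)).filter (fun j : ℕ => 0 < α - (j : ℝ) + (n : ℝ)),
              S j / ((α - j + n : ℝ) : ℂ) * ((R ^ (α - j + n) : ℝ) : ℂ))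
      atTop
      (𝓝 ((∫ ξ, τ ξ)
        + ∑ j ∈ Finset.range (N + 1),
            ((∫ ξ in Metric.closedBall (0 : EuclideanSpace ℝ (Fin n)) 1,
                (ψ ξ : ℂ) * σh j ξ)
              - S j / ((α - j + n : ℝ) : ℂ)))) := by
  classical
  obtain ⟨r₀, hr₀pos, hr₀⟩ := hψ0
  haveI : Nonempty (Fin n) := ⟨⟨0, hn⟩⟩
  -- continuity of the cutoff products
  have hgcont : ∀ j ≤ N, Continuous
      (fun ξ : EuclideanSpace ℝ (Fin n) => (ψ ξ : ℂ) * σh j ξ) := by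
    intro j hj
    rw [continuous_iff_continuousAt]
    intro x
    rcases lt_or_ge ‖x‖ r₀ with hx | hx
    · have hev : (fun ξ : EuclideanSpace ℝ (Fin n) => (ψ ξ : ℂ) * σh j ξ)
          =ᶠ[𝓝 x] fun _ => (0 : ℂ) := by
        filter_upwards [Metric.isOpen_ball.mem_nhds
          (show x ∈ Metric.ball (0 : EuclideanSpace ℝ (Fin n)) r₀ from
            mem_ball_zero_iff.mpr hx)] with ξ hξ
        simp [hr₀ ξ (le_of_lt (mem_ball_zero_iff.mp hξ))]
      exact continuousAt_const.congr hev.symm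
    · have hx0 : x ≠ 0 := by
        intro h; rw [h, norm_zero] at hx; exact absurd hx (not_le.mpr hr₀pos)
      exact ((Complex.continuous_ofReal.comp hψsmooth.continuous).continuousAt).mul
        ((hcont j hj).continuousAt (isOpen_ne.mem_nhds hx0))
  -- integrability on closed balls
  have hgint : ∀ j ≤ N, ∀ R : ℝ, IntegrableOn
      (fun ξ : EuclideanSpace ℝ (Fin n) => (ψ ξ : ℂ) * σh j ξ)
      (Metric.closedBall (0 : EuclideanSpace ℝ (Fin n)) R) := fun j hj R =>
    (hgcont j hj).continuousOn.integrableOn_compact (isCompact_closedBall _ _)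
  -- the annuli
  have hAcompact : ∀ R : ℝ, IsCompact
      ((Metric.closedBall (0 : EuclideanSpace ℝ (Fin n)) R) \ Metric.ball 0 1) :=
    fun R => (isCompact_closedBall _ _).diff Metric.isOpen_ball
  have hAsub : ∀ R : ℝ,
      ((Metric.closedBall (0 : EuclideanSpace ℝ (Fin n)) R) \ Metric.ball 0 1)
        ⊆ {ξ | ξ ≠ 0} := by
    intro R ξ hξ
    have h1 : (1 : ℝ) ≤ ‖ξ‖ :=
      not_lt.mp fun h => hξ.2 (mem_ball_zero_iff.mpr h)
    intro h0
    rw [h0, norm_zero] at h1; linarith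
  have hAint : ∀ j ≤ N, ∀ R : ℝ, IntegrableOn (σh j)
      ((Metric.closedBall (0 : EuclideanSpace ℝ (Fin n)) R) \ Metric.ball 0 1) :=
    fun j hj R => ((hcont j hj).mono (hAsub R)).integrableOn_compact (hAcompact R)
  have hBmeas : ∀ R : ℝ, MeasurableSet
      ((Metric.closedBall (0 : EuclideanSpace ℝ (Fin n)) R) \ Metric.closedBall 0 1) :=
    fun R => measurableSet_closedBall.diff measurableSet_closedBall
  -- B =ᵐ A
  have hBA : ∀ R : ℝ,
      ((Metric.closedBall (0 : EuclideanSpace ℝ (Fin n)) R) \ Metric.closedBall 0 1 : Set (EuclideanSpace ℝ (Fin n)))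
        =ᵐ[volume]
      ((Metric.closedBall (0 : EuclideanSpace ℝ (Fin n)) R) \ Metric.ball 0 1 : Set (EuclideanSpace ℝ (Fin n))) := by
    intro R
    rw [MeasureTheory.ae_eq_set]
    constructor
    · have : ((Metric.closedBall (0 : EuclideanSpace ℝ (Fin n)) R) \ Metric.closedBall 0 1)
          \ ((Metric.closedBall (0 : EuclideanSpace ℝ (Fin n)) R) \ Metric.ball 0 1) = ∅ := by
        apply diff_eq_empty.mpr
        exact diff_subset_diff_right Metric.ball_subset_closedBall
      rw [this]; exact measure_empty
    · refine measure_mono_null ?_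
        (Measure.addHaar_sphere (volume : Measure (EuclideanSpace ℝ (Fin n))) 0 1)
      intro ξ hξ
      have h1 : (1 : ℝ) ≤ ‖ξ‖ :=
        not_lt.mp fun h => hξ.1.2 (mem_ball_zero_iff.mpr h)
      have h2 : ‖ξ‖ ≤ 1 := by
        by_contra h
        exact hξ.2 ⟨hξ.1.1, fun hc => h (mem_closedBall_zero_iff.mp hc)⟩
      exact mem_sphere_zero_iff_norm.mpr (le_antisymm h2 h1)
  -- the key decomposition for R ≥ 1
  have key : ∀ R : ℝ, 1 ≤ R →
      (∫ ξ in Metric.closedBall (0 : EuclideanSpace ℝ (Fin n)) R, σ ξ)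
        = (∫ ξ in Metric.closedBall (0 : EuclideanSpace ℝ (Fin n)) R, τ ξ)
          + ∑ j ∈ Finset.range (N + 1),
              ((∫ ξ in Metric.closedBall (0 : EuclideanSpace ℝ (Fin n)) 1,
                  (ψ ξ : ℂ) * σh j ξ)
                + S j * (((R ^ (α - j + n) : ℝ) : ℂ) - 1) / ((α - j + n : ℝ) : ℂ)) := by
    intro R hR
    have hsplit : (∫ ξ in Metric.closedBall (0 : EuclideanSpace ℝ (Fin n)) R, σ ξ)
        = (∫ ξ in Metric.closedBall (0 : EuclideanSpace ℝ (Fin n)) R, τ ξ)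
          + ∑ j ∈ Finset.range (N + 1),
              ∫ ξ in Metric.closedBall (0 : EuclideanSpace ℝ (Fin n)) R,
                (ψ ξ : ℂ) * σh j ξ := by
      simp only [hσ]
      rw [integral_add hτ.integrableOn
        (integrable_finset_sum _ fun j hj =>
          hgint j (Nat.lt_succ_iff.mp (Finset.mem_range.mp hj)) R),
        integral_finset_sum _ fun j hj =>
          hgint j (Nat.lt_succ_iff.mp (Finset.mem_range.mp hj)) R]
    rw [hsplit]
    congr 1
    refine Finset.sum_congr rfl fun j hj => ?_
    have hjN : j ≤ N := Nat.lt_succ_iff.mp (Finset.mem_range.mp hj)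
    have hcover : Metric.closedBall (0 : EuclideanSpace ℝ (Fin n)) R
        = Metric.closedBall 0 1 ∪
          ((Metric.closedBall (0 : EuclideanSpace ℝ (Fin n)) R) \ Metric.closedBall 0 1) := by
      ext ξ
      simp only [mem_union, mem_diff, mem_closedBall_zero_iff]
      constructor
      · intro h
        by_cases h1 : ‖ξ‖ ≤ 1
        · exact Or.inl h1
        · exact Or.inr ⟨h, h1⟩
      · rintro (h | ⟨h, _⟩)
        · exact h.trans hR
        · exact h
    rw [hcover, setIntegral_union disjoint_sdiff_self_right (hBmeas R)
      (hgint j hjN 1)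
      ((hgint j hjN R).mono_set diff_subset)]
    congr 1
    have e1 : (∫ ξ in
          ((Metric.closedBall (0 : EuclideanSpace ℝ (Fin n)) R) \ Metric.closedBall 0 1),
          (ψ ξ : ℂ) * σh j ξ)
        = ∫ ξ in
          ((Metric.closedBall (0 : EuclideanSpace ℝ (Fin n)) R) \ Metric.closedBall 0 1),
          σh j ξ := by
      refine setIntegral_congr_fun (hBmeas R) fun ξ hξ => ?_
      have h1 : (1 : ℝ) ≤ ‖ξ‖ :=
        le_of_lt (not_le.mp fun h : ‖ξ‖ ≤ 1 => hξ.2 (mem_closedBall_zero_iff.mpr h))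
      rw [hψ1 ξ h1]
      simp
    have e2 : (∫ ξ in
          ((Metric.closedBall (0 : EuclideanSpace ℝ (Fin n)) R) \ Metric.closedBall 0 1),
          σh j ξ)
        = ∫ ξ in {ξ : EuclideanSpace ℝ (Fin n) | 1 ≤ ‖ξ‖ ∧ ‖ξ‖ ≤ R}, σh j ξ := by
      have hset : (Metric.closedBall (0 : EuclideanSpace ℝ (Fin n)) R \ Metric.ball 0 1)
          = {ξ : EuclideanSpace ℝ (Fin n) | 1 ≤ ‖ξ‖ ∧ ‖ξ‖ ≤ R} := by
        ext ξ
        constructor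
        · intro hξ
          exact ⟨not_lt.mp fun h => hξ.2 (mem_ball_zero_iff.mpr h),
            mem_closedBall_zero_iff.mp hξ.1⟩
        · intro hξ
          exact ⟨mem_closedBall_zero_iff.mpr hξ.2,
            fun h => absurd (mem_ball_zero_iff.mp h) (not_lt.mpr hξ.1)⟩
      rw [setIntegral_congr_set (hBA R), hset]
    rw [e1, e2, hS j hjN R hR]
  -- limits
  have hT1 : Tendsto
      (fun R : ℝ => ∫ ξ in Metric.closedBall (0 : EuclideanSpace ℝ (Fin n)) R, τ ξ)
      atTop (𝓝 (∫ ξ, τ ξ)) := by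
    have hU : (⋃ R : ℝ, Metric.closedBall (0 : EuclideanSpace ℝ (Fin n)) R) = univ := by
      ext ξ
      simp only [mem_iUnion, Metric.mem_closedBall, mem_univ, iff_true]
      exact ⟨dist ξ 0, le_refl _⟩
    have := tendsto_setIntegral_of_monotone
      (s := fun R : ℝ => Metric.closedBall (0 : EuclideanSpace ℝ (Fin n)) R)
      (fun R => measurableSet_closedBall)
      (fun a b hab => Metric.closedBall_subset_closedBall hab)
      (by rw [hU]; exact hτ.integrableOn)
    rwa [hU, Measure.restrict_univ] at this
  have hT3 : Tendsto
      (fun R : ℝ => ∑ j ∈ (Finset.range (N + 1)).filter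
          (fun j : ℕ => ¬ 0 < α - (j : ℝ) + (n : ℝ)),
        S j / ((α - j + n : ℝ) : ℂ) * ((R ^ (α - j + n) : ℝ) : ℂ))
      atTop (𝓝 0) := by
    have : Tendsto
        (fun R : ℝ => ∑ j ∈ (Finset.range (N + 1)).filter
            (fun j : ℕ => ¬ 0 < α - (j : ℝ) + (n : ℝ)),
          S j / ((α - j + n : ℝ) : ℂ) * ((R ^ (α - j + n) : ℝ) : ℂ))
        atTop (𝓝 (∑ j ∈ (Finset.range (N + 1)).filter
            (fun j : ℕ => ¬ 0 < α - (j : ℝ) + (n : ℝ)), (0 : ℂ))) := by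
      refine tendsto_finset_sum _ fun j hj => ?_
      simp only [Finset.mem_filter, Finset.mem_range, not_lt] at hj
      have hjN : j ≤ N := Nat.lt_succ_iff.mp hj.1
      have hneg : α - (j : ℝ) + (n : ℝ) < 0 :=
        lt_of_le_of_ne hj.2 (hne j hjN)
      have h1 : Tendsto (fun R : ℝ => R ^ (α - (j : ℝ) + (n : ℝ))) atTop (𝓝 0) := by
        have := tendsto_rpow_neg_atTop (y := -(α - (j : ℝ) + (n : ℝ))) (by linarith)
        simpa using this
      have h2 : Tendsto (fun R : ℝ => ((R ^ (α - (j : ℝ) + (n : ℝ)) : ℝ) : ℂ))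
          atTop (𝓝 0) := by
        have := (Complex.continuous_ofReal.tendsto 0).comp h1
        simpa [Function.comp_def] using this
      simpa using (tendsto_const_nhds (x := S j / ((α - j + n : ℝ) : ℂ))).mul h2
    simpa using this
  have main : Tendsto (fun R : ℝ =>
      ((∫ ξ in Metric.closedBall (0 : EuclideanSpace ℝ (Fin n)) R, τ ξ)
        + ∑ j ∈ Finset.range (N + 1),
            ((∫ ξ in Metric.closedBall (0 : EuclideanSpace ℝ (Fin n)) 1,
                (ψ ξ : ℂ) * σh j ξ)
              - S j / ((α - j + n : ℝ) : ℂ)))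
      + ∑ j ∈ (Finset.range (N + 1)).filter
          (fun j : ℕ => ¬ 0 < α - (j : ℝ) + (n : ℝ)),
        S j / ((α - j + n : ℝ) : ℂ) * ((R ^ (α - j + n) : ℝ) : ℂ))
      atTop
      (𝓝 (((∫ ξ, τ ξ)
        + ∑ j ∈ Finset.range (N + 1),
            ((∫ ξ in Metric.closedBall (0 : EuclideanSpace ℝ (Fin n)) 1,
                (ψ ξ : ℂ) * σh j ξ)
              - S j / ((α - j + n : ℝ) : ℂ))) + 0)) :=
    (hT1.add tendsto_const_nhds).add hT3
  rw [add_zero] at main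
  refine main.congr' ?_
  filter_upwards [eventually_ge_atTop (1 : ℝ)] with R hR
  rw [key R hR]
  have expand : ∑ j ∈ Finset.range (N + 1),
      ((∫ ξ in Metric.closedBall (0 : EuclideanSpace ℝ (Fin n)) 1,
          (ψ ξ : ℂ) * σh j ξ)
        + S j * (((R ^ (α - j + n) : ℝ) : ℂ) - 1) / ((α - j + n : ℝ) : ℂ))
      = (∑ j ∈ Finset.range (N + 1),
          ((∫ ξ in Metric.closedBall (0 : EuclideanSpace ℝ (Fin n)) 1,
              (ψ ξ : ℂ) * σh j ξ)
            - S j / ((α - j + n : ℝ) : ℂ)))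
        + ∑ j ∈ Finset.range (N + 1),
            S j / ((α - j + n : ℝ) : ℂ) * ((R ^ (α - j + n) : ℝ) : ℂ) := by
    rw [← Finset.sum_add_distrib]
    refine Finset.sum_congr rfl fun j hj => ?_
    have hb : ((α - j + n : ℝ) : ℂ) ≠ 0 :=
      Complex.ofReal_ne_zero.mpr (hne j (Nat.lt_succ_iff.mp (Finset.mem_range.mp hj)))
    field_simp
    ring
  rw [expand,
    ← Finset.sum_filter_add_sum_filter_not (Finset.range (N + 1))
      (fun j : ℕ => 0 < α - (j : ℝ) + (n : ℝ))
      (fun j : ℕ => S j / ((α - j + n : ℝ) : ℂ) * ((R ^ (α - j + n) : ℝ) : ℂ))]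
  ring
end

section
/- With the setup of the previous statement, if additionally one homogeneous component has degree exactly −n (i.e. α − j₀ + n = 0 for some j₀), then ∫_{|ξ|≤R} σ(ξ) dξ = Σ_{j≠j₀, α-j+n>0} c_j R^{α-j+n} + b log R + C + o(1) with b = ∫_{S^{n-1}} σ_{-n}(ω) dω; and the finite part C is invariant under the rescaling R ↦ λR (λ > 0) for all such σ if and only if b = 0. -/
open MeasureTheory Filter Set
open scoped Topology Classical

/-- As in the previous statement, but with one homogeneous component of degree
exactly `−n` (`α − j₀ + n = 0`), whose annulus integrals produce `b log R` with
`b = ∫_{S^{n-1}} σ_{-n} dω = S_{j₀}`.  Then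
`∫_{|ξ|≤R} σ = Σ_{j≠j₀, α-j+n>0} c_j R^{α-j+n} + b log R + C + o(1)`, the finite part for
the rescaled variable `R ↦ λR` equals `C + b log λ`, and it is invariant under all
rescalings `λ > 0` if and only if `b = 0`. -/
theorem stmt8 (n : ℕ) (hn : 0 < n) (N : ℕ) (α : ℝ) (j₀ : ℕ) (hj₀N : j₀ ≤ N)
    (σ τ : EuclideanSpace ℝ (Fin n) → ℂ)
    (σh : ℕ → EuclideanSpace ℝ (Fin n) → ℂ)
    (S : ℕ → ℂ)
    (ψ : EuclideanSpace ℝ (Fin n) → ℝ)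
    (hψsmooth : ContDiff ℝ (⊤ : ℕ∞) ψ)
    (hψrange : ∀ ξ, ψ ξ ∈ Set.Icc (0 : ℝ) 1)
    (hψ0 : ∃ r₀ > (0 : ℝ), ∀ ξ, ‖ξ‖ ≤ r₀ → ψ ξ = 0)
    (hψ1 : ∀ ξ, 1 ≤ ‖ξ‖ → ψ ξ = 1)
    (hτ : Integrable τ)
    (hσ : ∀ ξ, σ ξ = τ ξ + ∑ j ∈ Finset.range (N + 1), (ψ ξ : ℂ) * σh j ξ)
    (hcont : ∀ j ≤ N, ContinuousOn (σh j) {ξ | ξ ≠ 0})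
    (hhom : ∀ j ≤ N, ∀ t : ℝ, 0 < t → ∀ ξ, ξ ≠ 0 →
      σh j (t • ξ) = ((t ^ (α - j) : ℝ) : ℂ) * σh j ξ)
    (hdeg : α - j₀ + n = 0)
    (hne : ∀ j ≤ N, j ≠ j₀ → α - j + n ≠ 0)
    (hS : ∀ j ≤ N, j ≠ j₀ → ∀ R : ℝ, 1 ≤ R →
      ∫ ξ in {ξ : EuclideanSpace ℝ (Fin n) | 1 ≤ ‖ξ‖ ∧ ‖ξ‖ ≤ R}, σh j ξ
        = S j * (((R ^ (α - j + n) : ℝ) : ℂ) - 1) / ((α - j + n : ℝ) : ℂ))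
    -- the degree −n component produces logarithms; b := S j₀ is its sphere integral:
    (hSlog : ∀ R : ℝ, 1 ≤ R →
      ∫ ξ in {ξ : EuclideanSpace ℝ (Fin n) | 1 ≤ ‖ξ‖ ∧ ‖ξ‖ ≤ R}, σh j₀ ξ
        = S j₀ * (Real.log R : ℂ)) :
    ∃ C : ℂ,
      Tendsto (fun R : ℝ =>
          (∫ ξ in Metric.closedBall (0 : EuclideanSpace ℝ (Fin n)) R, σ ξ)
            - ∑ j ∈ (Finset.range (N + 1)).filter
                (fun j : ℕ => j ≠ j₀ ∧ 0 < α - (j : ℝ) + (n : ℝ)),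
                S j / ((α - j + n : ℝ) : ℂ) * ((R ^ (α - j + n) : ℝ) : ℂ)
            - S j₀ * (Real.log R : ℂ))
        atTop (𝓝 C)
      ∧ (∀ lam : ℝ, 0 < lam →
          Tendsto (fun R : ℝ =>
              (∫ ξ in Metric.closedBall (0 : EuclideanSpace ℝ (Fin n)) (lam * R), σ ξ)
                - ∑ j ∈ (Finset.range (N + 1)).filter
                    (fun j : ℕ => j ≠ j₀ ∧ 0 < α - (j : ℝ) + (n : ℝ)),
                    S j / ((α - j + n : ℝ) : ℂ) * (((lam * R) ^ (α - j + n) : ℝ) : ℂ)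
                - S j₀ * (Real.log R : ℂ))
            atTop (𝓝 (C + S j₀ * (Real.log lam : ℂ))))
      ∧ (S j₀ = 0 ↔
          ∀ lam : ℝ, 0 < lam →
            Tendsto (fun R : ℝ =>
                (∫ ξ in Metric.closedBall (0 : EuclideanSpace ℝ (Fin n)) (lam * R), σ ξ)
                  - ∑ j ∈ (Finset.range (N + 1)).filter
                      (fun j : ℕ => j ≠ j₀ ∧ 0 < α - (j : ℝ) + (n : ℝ)),
                      S j / ((α - j + n : ℝ) : ℂ) * (((lam * R) ^ (α - j + n) : ℝ) : ℂ)
                  - S j₀ * (Real.log R : ℂ))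
              atTop (𝓝 C)) := by
  classical
  obtain ⟨r₀, hr₀pos, hr₀⟩ := hψ0
  -- continuity of cut-off components
  have hg_cont : ∀ j, j ≤ N →
      Continuous (fun ξ : EuclideanSpace ℝ (Fin n) => (ψ ξ : ℂ) * σh j ξ) := by
    intro j hj
    rw [continuous_iff_continuousAt]
    intro x
    by_cases hx : x = (0 : EuclideanSpace ℝ (Fin n))
    · subst hx
      have hev : (fun ξ : EuclideanSpace ℝ (Fin n) => (ψ ξ : ℂ) * σh j ξ)
          =ᶠ[𝓝 (0 : EuclideanSpace ℝ (Fin n))] fun _ => (0 : ℂ) := by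
        filter_upwards [Metric.ball_mem_nhds (0 : EuclideanSpace ℝ (Fin n)) hr₀pos] with ξ hξ
        have hψξ : ψ ξ = 0 := hr₀ ξ (mem_ball_zero_iff.mp hξ).le
        simp [hψξ]
      exact (continuousAt_const (y := (0 : ℂ))).congr hev.symm
    · have hx' : ContinuousAt (σh j) x :=
        (hcont j hj).continuousAt (isOpen_ne.mem_nhds hx)
      exact ((Complex.continuous_ofReal.comp hψsmooth.continuous).continuousAt).mul hx'
  have hg_int : ∀ j, j ≤ N → ∀ R : ℝ,
      IntegrableOn (fun ξ => (ψ ξ : ℂ) * σh j ξ)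
        (Metric.closedBall (0 : EuclideanSpace ℝ (Fin n)) R) := by
    intro j hj R
    exact ((hg_cont j hj).continuousOn).integrableOn_compact (isCompact_closedBall _ _)
  have hAnn'Meas : ∀ R : ℝ,
      MeasurableSet {ξ : EuclideanSpace ℝ (Fin n) | 1 < ‖ξ‖ ∧ ‖ξ‖ ≤ R} := by
    intro R
    exact (measurableSet_lt measurable_const measurable_norm).inter
      (measurableSet_le measurable_norm measurable_const)
  have hsphere : volume (Metric.sphere (0 : EuclideanSpace ℝ (Fin n)) 1) = 0 :=
    Measure.addHaar_sphere_of_ne_zero (volume : Measure (EuclideanSpace ℝ (Fin n))) 0 one_ne_zero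
  -- splitting the ball integral
  have hsplit : ∀ j, j ≤ N → ∀ R : ℝ, 1 ≤ R →
      (∫ ξ in Metric.closedBall (0 : EuclideanSpace ℝ (Fin n)) R, (ψ ξ : ℂ) * σh j ξ)
        = (∫ ξ in Metric.closedBall (0 : EuclideanSpace ℝ (Fin n)) 1, (ψ ξ : ℂ) * σh j ξ)
          + ∫ ξ in {ξ : EuclideanSpace ℝ (Fin n) | 1 ≤ ‖ξ‖ ∧ ‖ξ‖ ≤ R}, σh j ξ := by
    intro j hj R hR
    have hunion : Metric.closedBall (0 : EuclideanSpace ℝ (Fin n)) R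
        = Metric.closedBall (0 : EuclideanSpace ℝ (Fin n)) 1
          ∪ {ξ : EuclideanSpace ℝ (Fin n) | 1 < ‖ξ‖ ∧ ‖ξ‖ ≤ R} := by
      ext ξ
      simp only [Metric.mem_closedBall, dist_zero_right, Set.mem_union, Set.mem_setOf_eq]
      constructor
      · intro h
        rcases le_or_gt ‖ξ‖ 1 with h1 | h1
        · exact Or.inl h1
        · exact Or.inr ⟨h1, h⟩
      · rintro (h | ⟨h1, h2⟩)
        · exact h.trans hR
        · exact h2
    have hdisj : Disjoint (Metric.closedBall (0 : EuclideanSpace ℝ (Fin n)) 1)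
        {ξ : EuclideanSpace ℝ (Fin n) | 1 < ‖ξ‖ ∧ ‖ξ‖ ≤ R} := by
      rw [Set.disjoint_left]
      intro ξ h1 h2
      exact absurd h2.1 (not_lt.mpr (mem_closedBall_zero_iff.mp h1))
    have hint1 : IntegrableOn (fun ξ => (ψ ξ : ℂ) * σh j ξ)
        (Metric.closedBall (0 : EuclideanSpace ℝ (Fin n)) 1) := hg_int j hj 1
    have hint2 : IntegrableOn (fun ξ => (ψ ξ : ℂ) * σh j ξ)
        {ξ : EuclideanSpace ℝ (Fin n) | 1 < ‖ξ‖ ∧ ‖ξ‖ ≤ R} := by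
      refine (hg_int j hj R).mono_set ?_
      intro ξ hξ
      simpa [Metric.mem_closedBall, dist_zero_right] using hξ.2
    rw [hunion, setIntegral_union hdisj (hAnn'Meas R) hint1 hint2]
    congr 1
    have e1 : (∫ ξ in {ξ : EuclideanSpace ℝ (Fin n) | 1 < ‖ξ‖ ∧ ‖ξ‖ ≤ R}, (ψ ξ : ℂ) * σh j ξ)
        = ∫ ξ in {ξ : EuclideanSpace ℝ (Fin n) | 1 < ‖ξ‖ ∧ ‖ξ‖ ≤ R}, σh j ξ := by
      refine setIntegral_congr_fun (hAnn'Meas R) ?_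
      intro ξ hξ
      simp [hψ1 ξ hξ.1.le]
    rw [e1]
    refine setIntegral_congr_set ?_
    rw [MeasureTheory.ae_eq_set]
    constructor
    · have hsub : {ξ : EuclideanSpace ℝ (Fin n) | 1 < ‖ξ‖ ∧ ‖ξ‖ ≤ R}
          ⊆ {ξ : EuclideanSpace ℝ (Fin n) | 1 ≤ ‖ξ‖ ∧ ‖ξ‖ ≤ R} := fun ξ hξ => ⟨hξ.1.le, hξ.2⟩
      rw [Set.diff_eq_empty.mpr hsub]
      exact measure_empty
    · refine measure_mono_null ?_ hsphere
      rintro ξ ⟨⟨h1, h2⟩, h3⟩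
      have hnl : ¬(1 < ‖ξ‖) := fun hlt => h3 ⟨hlt, h2⟩
      have : ‖ξ‖ = 1 := le_antisymm (not_lt.mp hnl) h1
      simpa [mem_sphere_zero_iff_norm] using this
  -- ball integral of σ
  have hF : ∀ R : ℝ, 1 ≤ R →
      (∫ ξ in Metric.closedBall (0 : EuclideanSpace ℝ (Fin n)) R, σ ξ)
        = (∫ ξ in Metric.closedBall (0 : EuclideanSpace ℝ (Fin n)) R, τ ξ)
          + ∑ j ∈ Finset.range (N + 1),
              ((∫ ξ in Metric.closedBall (0 : EuclideanSpace ℝ (Fin n)) 1, (ψ ξ : ℂ) * σh j ξ)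
                + ∫ ξ in {ξ : EuclideanSpace ℝ (Fin n) | 1 ≤ ‖ξ‖ ∧ ‖ξ‖ ≤ R}, σh j ξ) := by
    intro R hR
    have h1 : (∫ ξ in Metric.closedBall (0 : EuclideanSpace ℝ (Fin n)) R, σ ξ)
        = ∫ ξ in Metric.closedBall (0 : EuclideanSpace ℝ (Fin n)) R,
            (τ ξ + ∑ j ∈ Finset.range (N + 1), (ψ ξ : ℂ) * σh j ξ) :=
      integral_congr_ae (ae_of_all _ fun ξ => hσ ξ)
    rw [h1, integral_add hτ.integrableOn
        (integrable_finset_sum _ fun j hj => hg_int j (Finset.mem_range_succ_iff.mp hj) R),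
      integral_finset_sum _ (fun j hj => hg_int j (Finset.mem_range_succ_iff.mp hj) R)]
    congr 1
    exact Finset.sum_congr rfl fun j hj => hsplit j (Finset.mem_range_succ_iff.mp hj) R hR
  -- annulus formula
  have hA : ∀ j, j ≤ N → ∀ R : ℝ, 1 ≤ R →
      (∫ ξ in {ξ : EuclideanSpace ℝ (Fin n) | 1 ≤ ‖ξ‖ ∧ ‖ξ‖ ≤ R}, σh j ξ)
        = if j = j₀ then S j₀ * (Real.log R : ℂ)
          else S j * (((R ^ (α - j + n) : ℝ) : ℂ) - 1) / ((α - j + n : ℝ) : ℂ) := by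
    intro j hj R hR
    by_cases h : j = j₀
    · subst h; simp [hSlog R hR]
    · simp [h, hS j hj h R hR]
  -- limit of the τ part
  have hτlim : Tendsto
      (fun R : ℝ => ∫ ξ in Metric.closedBall (0 : EuclideanSpace ℝ (Fin n)) R, τ ξ)
      atTop (𝓝 (∫ ξ, τ ξ)) := by
    have hu : (⋃ R : ℝ, Metric.closedBall (0 : EuclideanSpace ℝ (Fin n)) R) = Set.univ := by
      refine Set.eq_univ_of_forall fun x => ?_
      exact Set.mem_iUnion.mpr ⟨‖x‖, by simp [Metric.mem_closedBall, dist_zero_right]⟩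
    have h := tendsto_setIntegral_of_monotone (μ := volume) (f := τ)
      (fun R : ℝ => measurableSet_closedBall)
      (fun a b hab => Metric.closedBall_subset_closedBall hab)
      (by rw [hu]; exact hτ.integrableOn)
    rwa [hu, setIntegral_univ] at h
  -- per-component limits
  have hWlim : ∀ j ∈ Finset.range (N + 1), Tendsto (fun R : ℝ =>
      (if j = j₀ then S j₀ * (Real.log R : ℂ)
        else S j * (((R ^ (α - j + n) : ℝ) : ℂ) - 1) / ((α - j + n : ℝ) : ℂ))
      - (if j ≠ j₀ ∧ 0 < α - (j : ℝ) + (n : ℝ)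
          then S j / ((α - j + n : ℝ) : ℂ) * ((R ^ (α - j + n) : ℝ) : ℂ) else 0)
      - (if j = j₀ then S j₀ * (Real.log R : ℂ) else 0))
      atTop (𝓝 (-S j / ((α - j + n : ℝ) : ℂ))) := by
    intro j hjmem
    have hj : j ≤ N := Finset.mem_range_succ_iff.mp hjmem
    by_cases hjj : j = j₀
    · subst hjj
      have h0 : ((α - (j : ℝ) + (n : ℝ) : ℝ) : ℂ) = 0 := by rw [hdeg]; simp
      simp only [if_pos rfl, ne_eq, not_true_eq_false, false_and, if_false, sub_zero, sub_self,
        h0, div_zero, neg_zero]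
      exact tendsto_const_nhds
    · have hd0 : α - (j : ℝ) + (n : ℝ) ≠ 0 := hne j hj hjj
      have hdC : ((α - (j : ℝ) + (n : ℝ) : ℝ) : ℂ) ≠ 0 := Complex.ofReal_ne_zero.mpr hd0
      by_cases hpos : 0 < α - (j : ℝ) + (n : ℝ)
      · simp only [if_neg hjj, if_pos (show j ≠ j₀ ∧ 0 < α - (j : ℝ) + (n : ℝ) from ⟨hjj, hpos⟩),
          sub_zero]
        have heq : ∀ R : ℝ,
            S j * (((R ^ (α - j + n) : ℝ) : ℂ) - 1) / ((α - j + n : ℝ) : ℂ)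
              - S j / ((α - j + n : ℝ) : ℂ) * ((R ^ (α - j + n) : ℝ) : ℂ)
            = -S j / ((α - j + n : ℝ) : ℂ) := by
          intro R
          field_simp
          ring
        simp only [heq]
        exact tendsto_const_nhds
      · simp only [if_neg hjj,
          if_neg (show ¬(j ≠ j₀ ∧ 0 < α - (j : ℝ) + (n : ℝ)) from fun h => hpos h.2),
          sub_zero]
        have hlt : α - (j : ℝ) + (n : ℝ) < 0 := lt_of_le_of_ne (not_lt.mp hpos) hd0
        have h1 : Tendsto (fun R : ℝ => R ^ (α - (j : ℝ) + (n : ℝ))) atTop (𝓝 0) := by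
          have := tendsto_rpow_neg_atTop (y := -(α - (j : ℝ) + (n : ℝ))) (by linarith)
          simpa using this
        have h2 : Tendsto (fun R : ℝ => ((R ^ (α - (j : ℝ) + (n : ℝ)) : ℝ) : ℂ)) atTop (𝓝 0) := by
          have := (Complex.continuous_ofReal.tendsto 0).comp h1
          simpa [Function.comp_def] using this
        have h3 := ((h2.sub (tendsto_const_nhds (x := (1 : ℂ)))).const_mul (S j)).div_const
          (((α - (j : ℝ) + (n : ℝ) : ℝ)) : ℂ)
        simpa [zero_sub, mul_neg_one, neg_div] using h3
  -- main limit, part 1 bundled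
  set K : ℂ := ∑ j ∈ Finset.range (N + 1),
      ∫ ξ in Metric.closedBall (0 : EuclideanSpace ℝ (Fin n)) 1, (ψ ξ : ℂ) * σh j ξ with hK
  set C : ℂ := (∫ ξ, τ ξ) + K
      + ∑ j ∈ Finset.range (N + 1), (-S j / ((α - j + n : ℝ) : ℂ)) with hC
  have key : Tendsto (fun R : ℝ =>
      (∫ ξ in Metric.closedBall (0 : EuclideanSpace ℝ (Fin n)) R, σ ξ)
        - ∑ j ∈ (Finset.range (N + 1)).filter
            (fun j : ℕ => j ≠ j₀ ∧ 0 < α - (j : ℝ) + (n : ℝ)),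
            S j / ((α - j + n : ℝ) : ℂ) * ((R ^ (α - j + n) : ℝ) : ℂ)
        - S j₀ * (Real.log R : ℂ)) atTop (𝓝 C) := by
    have hlim : Tendsto (fun R : ℝ =>
        ((∫ ξ in Metric.closedBall (0 : EuclideanSpace ℝ (Fin n)) R, τ ξ) + K)
          + ∑ j ∈ Finset.range (N + 1),
            ((if j = j₀ then S j₀ * (Real.log R : ℂ)
              else S j * (((R ^ (α - j + n) : ℝ) : ℂ) - 1) / ((α - j + n : ℝ) : ℂ))
            - (if j ≠ j₀ ∧ 0 < α - (j : ℝ) + (n : ℝ)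
                then S j / ((α - j + n : ℝ) : ℂ) * ((R ^ (α - j + n) : ℝ) : ℂ) else 0)
            - (if j = j₀ then S j₀ * (Real.log R : ℂ) else 0)))
        atTop (𝓝 C) := by
      rw [hC, add_assoc, ← add_assoc (∫ ξ, τ ξ)]
      exact (hτlim.add_const K).add (tendsto_finset_sum _ hWlim)
    refine hlim.congr' ?_
    filter_upwards [eventually_ge_atTop (1 : ℝ)] with R hR
    have hlog : S j₀ * (Real.log R : ℂ)
        = ∑ j ∈ Finset.range (N + 1), (if j = j₀ then S j₀ * (Real.log R : ℂ) else 0) := by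
      rw [Finset.sum_ite_eq' (Finset.range (N + 1)) j₀ (fun _ => S j₀ * (Real.log R : ℂ)),
        if_pos (Finset.mem_range_succ_iff.mpr hj₀N)]
    have hFR := hF R hR
    rw [Finset.sum_add_distrib, Finset.sum_congr rfl
        (fun j hj => hA j (Finset.mem_range_succ_iff.mp hj) R hR), ← hK] at hFR
    rw [hFR, Finset.sum_sub_distrib, Finset.sum_sub_distrib, ← hlog, ← Finset.sum_filter]
    ring
  have part2 : ∀ lam : ℝ, 0 < lam →
      Tendsto (fun R : ℝ =>
          (∫ ξ in Metric.closedBall (0 : EuclideanSpace ℝ (Fin n)) (lam * R), σ ξ)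
            - ∑ j ∈ (Finset.range (N + 1)).filter
                (fun j : ℕ => j ≠ j₀ ∧ 0 < α - (j : ℝ) + (n : ℝ)),
                S j / ((α - j + n : ℝ) : ℂ) * (((lam * R) ^ (α - j + n) : ℝ) : ℂ)
            - S j₀ * (Real.log R : ℂ))
        atTop (𝓝 (C + S j₀ * (Real.log lam : ℂ))) := by
    intro lam hlam
    have hcomp : Tendsto (fun R : ℝ => lam * R) atTop atTop :=
      Tendsto.const_mul_atTop hlam tendsto_id
    have h1 := key.comp hcomp
    have h2 := h1.add (tendsto_const_nhds (x := S j₀ * (Real.log lam : ℂ)))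
    refine h2.congr' ?_
    filter_upwards [eventually_gt_atTop (0 : ℝ)] with R hR
    have hlog : Real.log (lam * R) = Real.log lam + Real.log R :=
      Real.log_mul (ne_of_gt hlam) (ne_of_gt hR)
    simp only [Function.comp]
    rw [hlog]
    push_cast
    ring
  refine ⟨C, key, part2, ?_, ?_⟩
  · intro h0 lam hlam
    have h2 := part2 lam hlam
    rw [h0] at h2 ⊢
    simpa using h2
  · intro h
    have h2 := part2 (Real.exp 1) (Real.exp_pos 1)
    have h3 := h (Real.exp 1) (Real.exp_pos 1)
    have h4 := tendsto_nhds_unique h2 h3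
    rw [Real.log_exp] at h4
    have : S j₀ * ((1 : ℝ) : ℂ) = 0 := by
      have := h4
      linear_combination this
    simpa using this
end

section
/- Differentiation under the cut-off integral: let (t, ξ) ↦ σ_t(ξ) be a family as in the cut-off integral setup, with fixed noninteger order α (so each σ_t = τ_t + Σ_j ψ (σ_t)_{α-j} with α−j+n ≠ 0), such that t ↦ τ_t is C¹ into L¹(ℝⁿ) with ‖∂_t τ_t‖ dominated locally uniformly by an L¹ function, and each t ↦ (σ_t)_{α-j} is C¹ with derivatives uniformly bounded on compact t-intervals. Then t ↦ ⨍ σ_t(ξ) dξ (the finite-part/cut-off integral) is differentiable and d/dt ⨍ σ_t dξ = ⨍ ∂_t σ_t dξ. -/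
open MeasureTheory Filter Set
open scoped Topology Classical

set_option maxHeartbeats 1000000

/-- The cut-off (finite part) integral
`⨍ σ dξ := ∫ τ + Σ_{j≤N} [∫_{|ξ|≤1} ψ σ_{α-j} − (∫_{S^{n-1}} σ_{α-j} dω)/(α−j+n)]`
of a classical symbol `σ = τ + Σ_j ψ σ_{α-j}` of order `α` on `ℝⁿ`. -/
noncomputable def cutoffIntegral (n N : ℕ) (α : ℝ)
    (ψ : EuclideanSpace ℝ (Fin n) → ℝ)
    (τ : EuclideanSpace ℝ (Fin n) → ℂ)
    (σh : ℕ → EuclideanSpace ℝ (Fin n) → ℂ) : ℂ :=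
  (∫ ξ, τ ξ) + ∑ j ∈ Finset.range (N + 1),
    ((∫ ξ in Metric.closedBall (0 : EuclideanSpace ℝ (Fin n)) 1, (ψ ξ : ℂ) * σh j ξ)
      - (∫ ω : Metric.sphere (0 : EuclideanSpace ℝ (Fin n)) 1, σh j (ω : EuclideanSpace ℝ (Fin n))
            ∂((volume : Measure (EuclideanSpace ℝ (Fin n))).toSphere))
        / ((α - j + n : ℝ) : ℂ))

lemma auxCont {n : ℕ} {ψ : EuclideanSpace ℝ (Fin n) → ℝ}
    (hψ : Continuous ψ) {r₀ : ℝ} (hr₀ : 0 < r₀)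
    (hψ0 : ∀ ξ, ‖ξ‖ ≤ r₀ → ψ ξ = 0)
    {σ : EuclideanSpace ℝ (Fin n) → ℂ} (hσ : ContinuousOn σ {ξ | ξ ≠ 0}) :
    Continuous fun ξ => (ψ ξ : ℂ) * σ ξ := by
  rw [continuous_iff_continuousAt]
  intro ξ
  by_cases hξ : ξ = 0
  · subst hξ
    have h0 : (fun ζ => (ψ ζ : ℂ) * σ ζ) =ᶠ[𝓝 (0 : EuclideanSpace ℝ (Fin n))]
        fun _ => (0 : ℂ) := by
      filter_upwards [Metric.ball_mem_nhds (0 : EuclideanSpace ℝ (Fin n)) hr₀] with ζ hζ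
      rw [hψ0 ζ (by rw [Metric.mem_ball, dist_zero_right] at hζ; exact hζ.le)]
      simp
    exact (continuousAt_const (y := (0:ℂ))).congr h0.symm
  · exact ((Complex.continuous_ofReal.comp hψ).continuousAt).mul
      (hσ.continuousAt (isOpen_ne.mem_nhds hξ))

lemma auxMeas {α : Type*} [MeasurableSpace α] {μ : Measure α}
    {F : ℝ → α → ℂ} {F' : α → ℂ} {t₀ : ℝ}
    (hmeas : ∀ s, AEStronglyMeasurable (F s) μ)
    (hderiv : ∀ ξ, HasDerivAt (fun s => F s ξ) (F' ξ) t₀) :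
    AEStronglyMeasurable F' μ := by
  have hseq : Tendsto (fun k : ℕ => t₀ + ((k : ℝ) + 1)⁻¹) atTop (𝓝[≠] t₀) := by
    rw [tendsto_nhdsWithin_iff]
    constructor
    · have : Tendsto (fun k : ℕ => ((k : ℝ) + 1)⁻¹) atTop (𝓝 0) := by
        simpa [one_div] using tendsto_one_div_add_atTop_nhds_zero_nat (𝕜 := ℝ)
      simpa using tendsto_const_nhds.add this
    · filter_upwards with k
      have : (0 : ℝ) < ((k : ℝ) + 1)⁻¹ := by positivity
      simp only [Set.mem_compl_iff, Set.mem_singleton_iff]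
      intro h
      nlinarith [this, h]
  have htend : ∀ ξ, Tendsto
      (fun k : ℕ => slope (fun s => F s ξ) t₀ (t₀ + ((k:ℝ)+1)⁻¹)) atTop (𝓝 (F' ξ)) :=
    fun ξ => (hasDerivAt_iff_tendsto_slope.mp (hderiv ξ)).comp hseq
  refine aestronglyMeasurable_of_tendsto_ae atTop (f := fun (k : ℕ) ξ =>
      slope (fun s => F s ξ) t₀ (t₀ + ((k:ℝ)+1)⁻¹)) ?_ (Filter.Eventually.of_forall htend)
  intro k
  simp only [slope, vsub_eq_sub]
  exact ((hmeas _).sub (hmeas t₀)).const_smul _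

/-- Differentiation under the cut-off integral.  For a `C¹` family
`t ↦ σ_t = τ_t + Σ_{j≤N} ψ (σ_t)_{α-j}` of classical symbols of fixed noninteger order `α`,
with `∂_t τ_t` dominated locally uniformly in `t` by an `L¹` function and the derivatives of
the homogeneous components uniformly bounded on compact `t`-intervals, the map
`t ↦ ⨍ σ_t dξ` is differentiable and `d/dt ⨍ σ_t dξ = ⨍ ∂_t σ_t dξ`. -/
theorem stmt9 (n : ℕ) (hn : 0 < n) (N : ℕ) (α : ℝ)
    (hα : ∀ m : ℤ, α ≠ (m : ℝ))
    (ψ : EuclideanSpace ℝ (Fin n) → ℝ)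
    (hψsmooth : ContDiff ℝ (⊤ : ℕ∞) ψ)
    (hψrange : ∀ ξ, ψ ξ ∈ Set.Icc (0 : ℝ) 1)
    (hψ0 : ∃ r₀ > (0 : ℝ), ∀ ξ, ‖ξ‖ ≤ r₀ → ψ ξ = 0)
    (hψ1 : ∀ ξ, 1 ≤ ‖ξ‖ → ψ ξ = 1)
    (τ τ' : ℝ → EuclideanSpace ℝ (Fin n) → ℂ)
    (σh σh' : ℝ → ℕ → EuclideanSpace ℝ (Fin n) → ℂ)
    (hτint : ∀ t, Integrable (τ t))
    (hτd : ∀ t ξ, HasDerivAt (fun s => τ s ξ) (τ' t ξ) t)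
    -- local uniform L¹ domination of ∂_t τ_t:
    (hτdom : ∀ t₀ : ℝ, ∃ η > (0 : ℝ), ∃ D : EuclideanSpace ℝ (Fin n) → ℝ,
      Integrable D ∧ ∀ t ∈ Set.Icc (t₀ - η) (t₀ + η), ∀ ξ, ‖τ' t ξ‖ ≤ D ξ)
    (hσcont : ∀ t, ∀ j ≤ N, ContinuousOn (σh t j) {ξ | ξ ≠ 0}
      ∧ ContinuousOn (σh' t j) {ξ | ξ ≠ 0})
    -- homogeneity of degree α − j of the components:
    (hhom : ∀ t, ∀ j ≤ N, ∀ c : ℝ, 0 < c → ∀ ξ, ξ ≠ 0 →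
      σh t j (c • ξ) = ((c ^ (α - j) : ℝ) : ℂ) * σh t j ξ)
    (hσd : ∀ j ≤ N, ∀ t ξ, HasDerivAt (fun s => σh s j ξ) (σh' t j ξ) t)
    -- local uniform bounds on the derivatives of the homogeneous components:
    (hσbound : ∀ t₀ : ℝ, ∃ η > (0 : ℝ), ∃ Cb : ℝ,
      ∀ t ∈ Set.Icc (t₀ - η) (t₀ + η), ∀ j ≤ N, ∀ ξ : EuclideanSpace ℝ (Fin n),
        (‖ξ‖ = 1 → ‖σh' t j ξ‖ ≤ Cb) ∧ (‖ξ‖ ≤ 1 → ‖(ψ ξ : ℂ) * σh' t j ξ‖ ≤ Cb)) :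
    ∀ t : ℝ, HasDerivAt (fun s => cutoffIntegral n N α ψ (τ s) (σh s))
      (cutoffIntegral n N α ψ (τ' t) (σh' t)) t := by
  intro t
  obtain ⟨r₀, hr₀, hψz⟩ := hψ0
  have hψc : Continuous ψ := hψsmooth.continuous
  have hballIcc : ∀ {η : ℝ}, Metric.ball t η ⊆ Set.Icc (t - η) (t + η) := by
    intro η
    rw [Real.ball_eq_Ioo]
    exact Set.Ioo_subset_Icc_self
  -- τ piece
  have hA : HasDerivAt (fun s => ∫ ξ, τ s ξ) (∫ ξ, τ' t ξ) t := by
    obtain ⟨η, hη, D, hD, hDom⟩ := hτdom t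
    exact (hasDerivAt_integral_of_dominated_loc_of_deriv_le (Metric.ball_mem_nhds t hη)
      (Filter.Eventually.of_forall fun s => (hτint s).aestronglyMeasurable) (hτint t)
      (auxMeas (fun s => (hτint s).aestronglyMeasurable) (fun ξ => hτd t ξ))
      (Filter.Eventually.of_forall fun ξ s hs => hDom s (hballIcc hs) ξ) hD
      (Filter.Eventually.of_forall fun ξ s hs => hτd s ξ)).2
  obtain ⟨η, hη, Cb, hCb⟩ := hσbound t
  -- ball piece
  have hB : ∀ j ≤ N, HasDerivAt
      (fun s => ∫ ξ in Metric.closedBall (0 : EuclideanSpace ℝ (Fin n)) 1,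
        (ψ ξ : ℂ) * σh s j ξ)
      (∫ ξ in Metric.closedBall (0 : EuclideanSpace ℝ (Fin n)) 1,
        (ψ ξ : ℂ) * σh' t j ξ) t := by
    intro j hj
    have hcF : ∀ s, Continuous fun ξ => (ψ ξ : ℂ) * σh s j ξ :=
      fun s => auxCont hψc hr₀ hψz (hσcont s j hj).1
    have hcF' : Continuous fun ξ => (ψ ξ : ℂ) * σh' t j ξ :=
      auxCont hψc hr₀ hψz (hσcont t j hj).2
    exact (hasDerivAt_integral_of_dominated_loc_of_deriv_le (bound := fun _ => Cb) (Metric.ball_mem_nhds t hη)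
      (Filter.Eventually.of_forall fun s => (hcF s).aestronglyMeasurable.restrict)
      ((hcF t).continuousOn.integrableOn_compact (isCompact_closedBall _ _))
      hcF'.aestronglyMeasurable.restrict
      ((ae_restrict_mem measurableSet_closedBall).mono fun ξ hξ s hs =>
        ((hCb s (hballIcc hs) j hj ξ).2
          (by simpa [Metric.mem_closedBall, dist_zero_right] using hξ)))
      (integrableOn_const measure_closedBall_lt_top.ne)
      (Filter.Eventually.of_forall fun ξ s hs => (hσd j hj s ξ).const_mul _)).2
  -- sphere piece
  have hC : ∀ j ≤ N, HasDerivAt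
      (fun s => ∫ ω : Metric.sphere (0 : EuclideanSpace ℝ (Fin n)) 1,
          σh s j (ω : EuclideanSpace ℝ (Fin n))
        ∂((volume : Measure (EuclideanSpace ℝ (Fin n))).toSphere))
      (∫ ω : Metric.sphere (0 : EuclideanSpace ℝ (Fin n)) 1,
          σh' t j (ω : EuclideanSpace ℝ (Fin n))
        ∂((volume : Measure (EuclideanSpace ℝ (Fin n))).toSphere)) t := by
    intro j hj
    have hne : ∀ ω : Metric.sphere (0 : EuclideanSpace ℝ (Fin n)) 1,
        (ω : EuclideanSpace ℝ (Fin n)) ∈ {ξ : EuclideanSpace ℝ (Fin n) | ξ ≠ 0} := by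
      intro ω
      simp only [Set.mem_setOf_eq]
      intro h
      have := norm_eq_of_mem_sphere ω
      rw [h] at this
      simp at this
    have hcS : ∀ s, Continuous fun ω : Metric.sphere (0 : EuclideanSpace ℝ (Fin n)) 1 =>
        σh s j (ω : EuclideanSpace ℝ (Fin n)) :=
      fun s => (hσcont s j hj).1.comp_continuous continuous_subtype_val hne
    have hcS' : Continuous fun ω : Metric.sphere (0 : EuclideanSpace ℝ (Fin n)) 1 =>
        σh' t j (ω : EuclideanSpace ℝ (Fin n)) :=
      (hσcont t j hj).2.comp_continuous continuous_subtype_val hne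
    have hint : ∀ s, Integrable (fun ω : Metric.sphere (0 : EuclideanSpace ℝ (Fin n)) 1 =>
        σh s j (ω : EuclideanSpace ℝ (Fin n)))
        ((volume : Measure (EuclideanSpace ℝ (Fin n))).toSphere) := by
      intro s
      exact (hcS s).integrable_of_hasCompactSupport
        (IsCompact.of_isClosed_subset isCompact_univ (isClosed_tsupport _) (Set.subset_univ _))
    exact (hasDerivAt_integral_of_dominated_loc_of_deriv_le (bound := fun _ => Cb) (Metric.ball_mem_nhds t hη)
      (Filter.Eventually.of_forall fun s => (hcS s).aestronglyMeasurable)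
      (hint t) hcS'.aestronglyMeasurable
      (ae_of_all _ fun ω s hs =>
        (hCb s (hballIcc hs) j hj ω).1 (norm_eq_of_mem_sphere ω))
      (integrable_const _)
      (ae_of_all _ fun ω s hs => hσd j hj s _)).2
  have key := hA.add (HasDerivAt.fun_sum (u := Finset.range (N + 1))
    (fun j hj => ((hB j (Nat.lt_succ_iff.mp (Finset.mem_range.mp hj))).sub
      ((hC j (Nat.lt_succ_iff.mp (Finset.mem_range.mp hj))).div_const
        ((α - j + n : ℝ) : ℂ)))))
  simpa [cutoffIntegral, Pi.add_def] using key
end
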